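/- arXiv:2208.15000 — 2 statements merged into one kernel-verified Lean document; each statement's English description precedes it below -/
import Mathlib

section
/- Let A = KQ/I be a special biserial algebra over an algebraically closed field K and let w be a string for A, with string module M(w), thin representation T(w), linear map ι : R^{Q0} → R^d and subspace R ⊆ R^d as defined. Then ι(D(M(w))) = D(T(w)) ∩ R. -/
attribute [local instance] Classical.propDecidable

/-- A finite quiver: finite sets of vertices and arrows with source and target maps. -/
structure FinQuiver where
  V : Type
  A : Type
  [fintypeV : Fintype V]
  [decEqV : DecidableEq V]
  [fintypeA : Fintype A]
  [decEqA : DecidableEq A]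
  s : A → V
  t : A → V

attribute [instance] FinQuiver.fintypeV FinQuiver.decEqV FinQuiver.fintypeA FinQuiver.decEqA

/-- A finite-dimensional representation of a finite quiver over a field `K`. -/
structure QRep (K : Type) [Field K] (Q : FinQuiver) where
  M : Q.V → Type
  [acg : ∀ i, AddCommGroup (M i)]
  [mod : ∀ i, Module K (M i)]
  [fd : ∀ i, FiniteDimensional K (M i)]
  φ : ∀ a : Q.A, M (Q.s a) →ₗ[K] M (Q.t a)

attribute [instance] QRep.acg QRep.mod QRep.fd

/-- A subrepresentation: a subspace at every vertex, compatible with the arrow maps. -/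
structure QSubRep {K : Type} [Field K] {Q : FinQuiver} (R : QRep K Q) where
  L : ∀ i, Submodule K (R.M i)
  compat : ∀ a : Q.A, ∀ x ∈ L (Q.s a), R.φ a x ∈ L (Q.t a)

def QSubRep.le {K : Type} [Field K] {Q : FinQuiver} {R : QRep K Q} (N N' : QSubRep R) : Prop :=
  ∀ i, N.L i ≤ N'.L i

/-- The dimension vector of a representation. -/
noncomputable def QRep.dimVec {K : Type} [Field K] {Q : FinQuiver} (R : QRep K Q) (i : Q.V) : ℕ :=
  Module.finrank K (R.M i)

/-- Standard inner product of a real vector with a dimension vector. -/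
def stabInner {Q : FinQuiver} (v : Q.V → ℝ) (d : Q.V → ℕ) : ℝ :=
  ∑ i, v i * (d i : ℝ)

/-- `v`-semistability of a representation. -/
def IsSemistable {K : Type} [Field K] {Q : FinQuiver} (R : QRep K Q) (v : Q.V → ℝ) : Prop :=
  stabInner v R.dimVec = 0 ∧
    ∀ N : QSubRep R, stabInner v (fun i => Module.finrank K (N.L i)) ≤ 0

/-- The stability space of a representation. -/
def stabSpace {K : Type} [Field K] {Q : FinQuiver} (R : QRep K Q) : Set (Q.V → ℝ) :=
  {v | IsSemistable R v}

/-- `v`-stability of a representation. -/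
def IsStable {K : Type} [Field K] {Q : FinQuiver} (R : QRep K Q) (v : Q.V → ℝ) : Prop :=
  stabInner v R.dimVec = 0 ∧
    ∀ N : QSubRep R, (∃ i, N.L i ≠ ⊥) → (∃ i, N.L i ≠ ⊤) →
      stabInner v (fun i => Module.finrank K (N.L i)) < 0

/-- The thin sincere representation with identity maps: `K` at every vertex. -/
noncomputable def thinRep (K : Type) [Field K] (Q : FinQuiver) : QRep K Q where
  M _ := K
  φ _ := LinearMap.id

/-- The set of all finite non-negative real linear combinations of elements of `X`. -/
def coneSpan {E : Type} [AddCommMonoid E] [Module ℝ E] (X : Set E) : Set E :=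
  {x | ∃ (n : ℕ) (c : Fin n → ℝ) (f : Fin n → E),
    (∀ j, 0 ≤ c j) ∧ (∀ j, f j ∈ X) ∧ x = ∑ j, c j • f j}

/-- The standard basis vector of `ℝ^{Q₀}` at a vertex. -/
noncomputable def eVec (Q : FinQuiver) (i : Q.V) : Q.V → ℝ := Pi.single i 1

/-- A subrepresentation viewed as a representation in its own right. -/
noncomputable def QSubRep.toRep {K : Type} [Field K] {Q : FinQuiver} {R : QRep K Q}
    (N : QSubRep R) : QRep K Q where
  M i := ↥(N.L i)
  φ a := (R.φ a).restrict (fun x hx => N.compat a x hx)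

/-- The quotient of a representation by a subrepresentation. -/
noncomputable def QRep.quotBy {K : Type} [Field K] {Q : FinQuiver} (R : QRep K Q)
    (N : QSubRep R) : QRep K Q where
  M i := R.M i ⧸ N.L i
  φ a := Submodule.mapQ _ _ (R.φ a) (fun x hx => N.compat a x hx)

/-- The quotient `N'/N` of nested subrepresentations, as a representation. -/
noncomputable def quotRep {K : Type} [Field K] {Q : FinQuiver} (R : QRep K Q)
    (N N' : QSubRep R) (h : QSubRep.le N N') : QRep K Q where
  M i := ↥(N'.L i) ⧸ Submodule.comap (N'.L i).subtype (N.L i)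
  φ a := Submodule.mapQ _ _ ((R.φ a).restrict (fun x hx => N'.compat a x hx))
    (by
      intro x hx
      simp only [Submodule.mem_comap, Submodule.subtype_apply,
        LinearMap.restrict_apply] at hx ⊢
      exact N.compat a _ hx)

/-- A representation is nonzero if some vertex space is nonzero. -/
def QRep.Nonzero {K : Type} [Field K] {Q : FinQuiver} (R : QRep K Q) : Prop :=
  ∃ i, Module.finrank K (R.M i) ≠ 0

/-- Indecomposability: nonzero and admitting no internal direct sum decomposition into two
nonzero subrepresentations. -/
def Indecomposable {K : Type} [Field K] {Q : FinQuiver} (R : QRep K Q) : Prop :=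
  R.Nonzero ∧
    ¬∃ U W : QSubRep R, (∃ i, U.L i ≠ ⊥) ∧ (∃ i, W.L i ≠ ⊥) ∧
      (∀ i, U.L i ⊓ W.L i = ⊥) ∧ (∀ i, U.L i ⊔ W.L i = ⊤)

/-- Isomorphism of representations. -/
def RepIso {K : Type} [Field K] {Q : FinQuiver} (R R' : QRep K Q) : Prop :=
  ∃ f : ∀ i, R.M i ≃ₗ[K] R'.M i,
    ∀ (a : Q.A) (x : R.M (Q.s a)), f (Q.t a) (R.φ a x) = R'.φ a (f (Q.s a) x)

/-- The support of a representation. -/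
def QRep.supp {K : Type} [Field K] {Q : FinQuiver} (R : QRep K Q) : Set Q.V :=
  {i | Module.finrank K (R.M i) ≠ 0}

/-- The stability space restricted to the coordinate subspace of the support. -/
def Dsupp {K : Type} [Field K] {Q : FinQuiver} (R : QRep K Q) : Set (Q.V → ℝ) :=
  stabSpace R ∩ {v | ∀ i, i ∉ R.supp → v i = 0}

/-- Standard inner product on `ℝ^V`. -/
def rInner {V : Type} [Fintype V] (a v : V → ℝ) : ℝ := ∑ i, a i * v i

/-- A face of a polyhedral cone. -/
def IsFace {V : Type} [Fintype V] (C F : Set (V → ℝ)) : Prop :=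
  ∃ a : V → ℝ, (∀ v ∈ C, rInner a v ≤ 0) ∧ F = C ∩ {v | rInner a v = 0}

/-- The dimension of the linear span of a subset of `ℝ^V`. -/
noncomputable def coneDim {V : Type} [Fintype V] (F : Set (V → ℝ)) : ℕ :=
  Module.finrank ℝ ↥(Submodule.span ℝ F)

/-- A facet: a face of codimension one. -/
def IsFacet {V : Type} [Fintype V] (C F : Set (V → ℝ)) : Prop :=
  IsFace C F ∧ coneDim F + 1 = coneDim C

/-- Composability of a list of arrows (a directed path). -/
def PathComposable {Q : FinQuiver} : List Q.A → Prop
  | [] => True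
  | [_] => True
  | a :: b :: l => Q.t a = Q.s b ∧ PathComposable (b :: l)

/-- Letters: direct arrows (`inl`) and formal inverses of arrows (`inr`). -/
abbrev Letter (Q : FinQuiver) := Q.A ⊕ Q.A

/-- Source of a letter. -/
def lsrc {Q : FinQuiver} : Letter Q → Q.V
  | Sum.inl a => Q.s a
  | Sum.inr a => Q.t a

/-- Target of a letter. -/
def ltgt {Q : FinQuiver} : Letter Q → Q.V
  | Sum.inl a => Q.t a
  | Sum.inr a => Q.s a

/-- The formal inverse of a letter. -/
def linv {Q : FinQuiver} : Letter Q → Letter Q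
  | Sum.inl a => Sum.inr a
  | Sum.inr a => Sum.inl a

/-- The underlying quiver arrow of a letter. -/
def und {Q : FinQuiver} : Letter Q → Q.A
  | Sum.inl a => a
  | Sum.inr a => a

/-- A letter is direct if it is an arrow (not a formal inverse). -/
def isDir {Q : FinQuiver} (c : Letter Q) : Prop := c.isLeft = true

/-- Composability of a word of letters. -/
def WordComposable {Q : FinQuiver} : List (Letter Q) → Prop
  | [] => True
  | [_] => True
  | c :: d :: l => ltgt c = lsrc d ∧ WordComposable (d :: l)

/-- Reducedness of a word: no letter is followed by its own inverse. -/
def WordReduced {Q : FinQuiver} : List (Letter Q) → Prop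
  | [] => True
  | [_] => True
  | c :: d :: l => d ≠ linv c ∧ WordReduced (d :: l)

/-- A bound quiver: a set of (monomial) relations generating an admissible ideal. -/
structure BoundQuiver (Q : FinQuiver) where
  rel : List Q.A → Prop
  adm_comp : ∀ u, rel u → PathComposable u ∧ 2 ≤ u.length
  adm_bound : ∃ N : ℕ, ∀ u : List Q.A, PathComposable u → N ≤ u.length →
    ∃ u', rel u' ∧ u' <:+: u

/-- The special biserial conditions on a bound quiver algebra. -/
def SpecialBiserial {Q : FinQuiver} (D : BoundQuiver Q) : Prop :=
  (∀ v : Q.V, Set.ncard {a : Q.A | Q.s a = v} ≤ 2) ∧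
  (∀ v : Q.V, Set.ncard {a : Q.A | Q.t a = v} ≤ 2) ∧
  (∀ a c d : Q.A, Q.t a = Q.s c → Q.t a = Q.s d → c ≠ d → D.rel [a, c] ∨ D.rel [a, d]) ∧
  (∀ a b c : Q.A, Q.t a = Q.s c → Q.t b = Q.s c → a ≠ b → D.rel [a, c] ∨ D.rel [b, c])

/-- A string: a nonempty composable reduced word such that no subword of it or of its
inverse lies in the ideal. -/
structure IsString {Q : FinQuiver} (D : BoundQuiver Q) (w : List (Letter Q)) : Prop where
  ne : w ≠ []
  comp : WordComposable w
  red : WordReduced w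
  avoid : ∀ u : List Q.A, u.map Sum.inl <:+: w → ¬D.rel u
  avoid_inv : ∀ u : List Q.A, (u.map Sum.inr).reverse <:+: w → ¬D.rel u

/-- The `k`-fold concatenation of a word with itself. -/
def listPow {α : Type} (u : List α) : ℕ → List α
  | 0 => []
  | n + 1 => u ++ listPow u n

/-- A band: a cyclic word all of whose powers are strings, which is not itself a proper
power of a shorter word. -/
def IsBand {Q : FinQuiver} (D : BoundQuiver Q) (b : List (Letter Q)) : Prop :=
  b ≠ [] ∧ (∀ m : ℕ, 1 ≤ m → IsString D (listPow b m)) ∧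
    ∀ (u : List (Letter Q)) (k : ℕ), 2 ≤ k → b ≠ listPow u k

/-- The `j`-th vertex visited by a (nonempty) walk `w`. -/
def wVtx {Q : FinQuiver} (w : List (Letter Q)) (hw : w ≠ []) (j : ℕ) : Q.V :=
  if j = 0 then lsrc (w.head hw) else ltgt (w.getD (j - 1) (w.head hw))

/-- The basis vector at position `j` is sent to the one at position `k` by the arrow `a`. -/
def stepsTo {Q : FinQuiver} (w : List (Letter Q)) (a : Q.A) (j k : ℕ) : Prop :=
  (k = j + 1 ∧ w[j]? = some (Sum.inl a)) ∨ (j = k + 1 ∧ w[k]? = some (Sum.inr a))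

/-- The string module `M(w)` of a nonempty walk `w`, with one standard basis vector for each
vertex visit, direct letters acting forwards and inverse letters acting backwards. -/
noncomputable def stringRep (K : Type) [Field K] (Q : FinQuiver) (w : List (Letter Q))
    (hw : w ≠ []) : QRep K Q where
  M i := ({j : Fin (w.length + 1) // wVtx w hw j = i} → K)
  φ a := Matrix.mulVecLin
    (fun (p : {j : Fin (w.length + 1) // wVtx w hw (j : ℕ) = Q.t a})
         (q : {j : Fin (w.length + 1) // wVtx w hw (j : ℕ) = Q.s a}) =>
      if stepsTo w a (q.1 : ℕ) (p.1 : ℕ) then (1 : K) else 0)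

/-- The vertex `v_j` traversed by a cyclic word (indices mod the length). -/
def bVtx {Q : FinQuiver} (b : List (Letter Q)) (hb : b ≠ []) (j : ℕ) : Q.V :=
  lsrc (b.getD (j % b.length) (b.head hb))

/-- The `j`-th letter of a cyclic word (indices mod the length). -/
def bLett {Q : FinQuiver} (b : List (Letter Q)) (hb : b ≠ []) (j : ℕ) : Letter Q :=
  b.getD (j % b.length) (b.head hb)

/-- Entry of the Jordan block of size `m` with eigenvalue `lam`. -/
noncomputable def jordEntry {K : Type} [Field K] (lam : K) {m : ℕ} (κ μ : Fin m) : K :=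
  if κ = μ then lam else if (μ : ℕ) + 1 = (κ : ℕ) then 1 else 0

/-- The matrix entry of the action of the arrow `a` on a band module, from the basis vector
`z_j^μ` to the basis vector `z_k^κ`: all letters act by identity matrices except the last
one, which acts by the Jordan block with eigenvalue `lam`. -/
noncomputable def bandEntry {Q : FinQuiver} (K : Type) [Field K] (b : List (Letter Q))
    (hb : b ≠ []) (lam : K) {m : ℕ} (a : Q.A) (k j : ℕ) (κ μ : Fin m) : K :=
  (if bLett b hb j = Sum.inl a ∧ (j + 1) % b.length = k % b.length then
    (if j % b.length + 1 = b.length then jordEntry lam κ μ else if κ = μ then 1 else 0)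
   else 0)
  + (if bLett b hb k = Sum.inr a ∧ (k + 1) % b.length = j % b.length then
    (if k % b.length + 1 = b.length then jordEntry lam κ μ else if κ = μ then 1 else 0)
   else 0)

/-- The band module `M(b, lam, m)`. -/
noncomputable def bandRep (K : Type) [Field K] (Q : FinQuiver) (b : List (Letter Q))
    (hb : b ≠ []) (lam : K) (m : ℕ) : QRep K Q where
  M i := (({j : Fin b.length // bVtx b hb j = i} × Fin m) → K)
  φ a := Matrix.mulVecLin
    (fun (p : {j : Fin b.length // bVtx b hb (j : ℕ) = Q.t a} × Fin m)
         (q : {j : Fin b.length // bVtx b hb (j : ℕ) = Q.s a} × Fin m) =>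
      bandEntry K b hb lam a (p.1.1 : ℕ) (q.1.1 : ℕ) p.2 q.2)

/-- The quiver `Q_w` having the same shape as the walk `w`. -/
@[reducible] def stringQuiver (Q : FinQuiver) (w : List (Letter Q)) : FinQuiver where
  V := Fin (w.length + 1)
  A := Fin w.length
  s j := match w.get j with
    | Sum.inl _ => j.castSucc
    | Sum.inr _ => j.succ
  t j := match w.get j with
    | Sum.inl _ => j.succ
    | Sum.inr _ => j.castSucc

/-- Cyclic successor in `Fin n`. -/
def cycSucc {n : ℕ} (j : Fin n) : Fin n := ⟨((j : ℕ) + 1) % n, Nat.mod_lt _ j.pos⟩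

/-- The cyclic quiver `Q_b` having the same shape as the cyclic word `b`. -/
@[reducible] def bandQuiver (Q : FinQuiver) (b : List (Letter Q)) : FinQuiver where
  V := Fin b.length
  A := Fin b.length
  s j := match b.get j with
    | Sum.inl _ => j
    | Sum.inr _ => cycSucc j
  t j := match b.get j with
    | Sum.inl _ => cycSucc j
    | Sum.inr _ => j

/-- A ray vector of a cone. -/
def IsRay {E : Type} [AddCommMonoid E] [Module ℝ E] (C : Set E) (u : E) : Prop :=
  u ∈ C ∧ u ≠ 0 ∧ ∀ x ∈ C, ∀ y ∈ C, u = x + y →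
    (∃ c : ℝ, 0 ≤ c ∧ x = c • u) ∧ ∃ c : ℝ, 0 ≤ c ∧ y = c • u

/-- A minimal admissible sum: a nonzero non-negative combination of elements of `S` lying in
the subspace `Rsub`, such that no nonzero non-negative combination supported on a proper
subset of its support lies in `Rsub`. -/
def IsMinAdmissibleSum {E : Type} [AddCommGroup E] [Module ℝ E] (Rsub : Set E)
    (S : Finset E) (x : E) : Prop :=
  ∃ lam : E → ℝ, (∀ s ∈ S, 0 ≤ lam s) ∧ x = ∑ s ∈ S, lam s • s ∧ x ∈ Rsub ∧ x ≠ 0 ∧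
    ¬∃ mu : E → ℝ, (∀ s ∈ S, 0 ≤ mu s) ∧
      {s ∈ S | mu s ≠ 0} ⊂ {s ∈ S | lam s ≠ 0} ∧
      (∑ s ∈ S, mu s • s) ∈ Rsub ∧ (∑ s ∈ S, mu s • s) ≠ 0

/-- The preorder induced by a walk `u` on the vertices: generated by `t(α) ≤ s(α)` over the
underlying arrows `α` of the letters of `u`. -/
def wordRel {Q : FinQuiver} (u : List (Letter Q)) : Q.V → Q.V → Prop :=
  Relation.ReflTransGen (fun x y => ∃ c ∈ u, Q.t (und c) = x ∧ Q.s (und c) = y)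

/-- `v` is obtained from the cyclic word `b` by deleting one letter. -/
def DeleteOne {Q : FinQuiver} (b v : List (Letter Q)) : Prop :=
  ∃ (l₁ l₂ : List (Letter Q)) (c : Letter Q), b = l₁ ++ c :: l₂ ∧ v = l₂ ++ l₁

/-- The generating vector of the stability space of a thin band module attached to the
`i`-th letter: `e_{v_i} - e_{v_{i+1}}` for a direct letter and its negative otherwise. -/
noncomputable def sVec {Q : FinQuiver} (b : List (Letter Q)) (hb : b ≠ []) (i : ℕ) :
    Q.V → ℝ :=
  if isDir (bLett b hb i) then
    Pi.single (bVtx b hb i) 1 - Pi.single (bVtx b hb (i + 1)) 1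
  else Pi.single (bVtx b hb (i + 1)) 1 - Pi.single (bVtx b hb i) 1

/-- The set `S = {s_1, …, s_n}` of generating vectors. -/
def Sset {Q : FinQuiver} (b : List (Letter Q)) (hb : b ≠ []) : Set (Q.V → ℝ) :=
  {u | ∃ i < b.length, u = sVec b hb i}

/-- The `g`-vector of the thin band module: the sum of the `s_i` over direct letters. -/
noncomputable def gVec {Q : FinQuiver} (b : List (Letter Q)) (hb : b ≠ []) : Q.V → ℝ :=
  ∑ i ∈ Finset.range b.length, if isDir (bLett b hb i) then sVec b hb i else 0

/-- The coefficient `ε_i` (for the mathematical index `i`, with letters `α_{i-1}`, `α_i`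
at 0-based positions `i-2`, `i-1`). -/
noncomputable def epsCoef {Q : FinQuiver} (b : List (Letter Q)) (hb : b ≠ []) (i : ℕ) : ℝ :=
  if ¬isDir (bLett b hb (i - 2)) ∧ isDir (bLett b hb (i - 1)) then 1
  else if isDir (bLett b hb (i - 2)) ∧ ¬isDir (bLett b hb (i - 1)) then -1
  else 0

/-- The vector `g_w` for `w = α_1 ⋯ α_m` (the `g`-vector of `M(w)`). -/
noncomputable def gwVec {Q : FinQuiver} (b : List (Letter Q)) (hb : b ≠ []) (m : ℕ) :
    Q.V → ℝ :=
  (if isDir (bLett b hb 0) then Pi.single (bVtx b hb 0) (1 : ℝ) else 0)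
  + (if 1 ≤ m ∧ ¬isDir (bLett b hb (m - 1)) then Pi.single (bVtx b hb m) (1 : ℝ) else 0)
  + (if 1 ≤ m ∧ isDir (bLett b hb m) then -Pi.single (bVtx b hb (m + 1)) (1 : ℝ) else 0)
  + (if isDir (bLett b hb (b.length - 1)) then -Pi.single (bVtx b hb (b.length - 1)) (1 : ℝ)
     else 0)
  + ∑ i ∈ Finset.Icc 2 m, epsCoef b hb i • (Pi.single (bVtx b hb (i - 1)) (1 : ℝ) : Q.V → ℝ)

/-- The vector `g_w'` for `w = α_1 ⋯ α_m` (equal to `-g^{M(w)ᵒᵖ}`). -/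
noncomputable def gwVec' {Q : FinQuiver} (b : List (Letter Q)) (hb : b ≠ []) (m : ℕ) :
    Q.V → ℝ :=
  (if ¬isDir (bLett b hb 0) then -Pi.single (bVtx b hb 0) (1 : ℝ) else 0)
  + (if 1 ≤ m ∧ isDir (bLett b hb (m - 1)) then -Pi.single (bVtx b hb m) (1 : ℝ) else 0)
  + (if 1 ≤ m ∧ ¬isDir (bLett b hb m) then Pi.single (bVtx b hb (m + 1)) (1 : ℝ) else 0)
  + (if ¬isDir (bLett b hb (b.length - 1)) then Pi.single (bVtx b hb (b.length - 1)) (1 : ℝ)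
     else 0)
  + ∑ i ∈ Finset.Icc 2 m, epsCoef b hb i • (Pi.single (bVtx b hb (i - 1)) (1 : ℝ) : Q.V → ℝ)


/-!
A vector `v` is semistable for `M(w)` exactly when `ι v` is semistable for `T(w)`, and every
vector of `R` is of the form `ι v`. The two semistability conditions agree because both
representations realise the same sets of positions along `w` as dimension counts of
subrepresentations. A subrepresentation of `T(w)` is a set of positions closed under the arrows
of `Q_w`, and the basis vectors at these positions span a subrepresentation of `M(w)`.
Conversely, order the basis of `M(w)` at each vertex by position along `w`: the pivot positions
of echelon bases of a subrepresentation `L` number `dim L_i` at each vertex `i`, and since in a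
reduced word every arrow moves basis vectors by a strictly increasing partial map of positions,
pivots are carried to pivots, so the pivot positions form a subrepresentation of `T(w)`.
-/

open Finset Matrix

section LeadingIndex

variable {K : Type} [Field K] {ι κ : Type} [LinearOrder ι] [LinearOrder κ]

def IsLeadingIndex (y : ι → K) (j : ι) : Prop :=
  y j ≠ 0 ∧ ∀ k, j < k → y k = 0

/-- The pivot positions of an echelon basis of `L`, pivots being last nonzero entries. -/
noncomputable def leadingIndices [Fintype ι] (L : Submodule K (ι → K)) : Finset ι :=
  {j | ∃ y ∈ L, IsLeadingIndex y j}

lemma mem_leadingIndices [Fintype ι] {L : Submodule K (ι → K)} {j : ι} :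
    j ∈ leadingIndices L ↔ ∃ y ∈ L, IsLeadingIndex y j := by
  simp [leadingIndices]

lemma exists_isLeadingIndex [Fintype ι] {y : ι → K} (hy : y ≠ 0) : ∃ j, IsLeadingIndex y j := by
  have hS : ({k | y k ≠ 0} : Finset ι).Nonempty := by
    obtain ⟨k, hk⟩ := Function.ne_iff.1 hy
    exact ⟨k, by simpa using hk⟩
  refine ⟨_, (mem_filter.1 (max'_mem _ hS)).2, fun k hk => ?_⟩
  by_contra h
  exact (le_max' _ k (by simpa using h)).not_gt hk

lemma linearIndependent_of_isLeadingIndex {s : Finset ι} (g : s → ι → K)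
    (hg : ∀ j, IsLeadingIndex (g j) j) : LinearIndependent K g := by
  let M : Matrix s s K := fun j k => g j k
  have hM : M.IsLowerTriangular := fun j k hjk => (hg j).2 k hjk
  have hdet : M.det ≠ 0 := by
    rw [Matrix.det_of_isLowerTriangular M hM]
    exact prod_ne_zero_iff.2 fun j _ => (hg j).1
  exact LinearIndependent.of_comp (LinearMap.funLeft K K Subtype.val)
    (Matrix.linearIndependent_rows_of_det_ne_zero hdet)

theorem finrank_eq_card_leadingIndices [Fintype ι] (L : Submodule K (ι → K)) :
    Module.finrank K L = #(leadingIndices L) := by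
  apply le_antisymm
  · let restrict : L →ₗ[K] (leadingIndices L → K) :=
      (LinearMap.funLeft K K Subtype.val).comp L.subtype
    have hinj : Function.Injective restrict := by
      rw [← LinearMap.ker_eq_bot, LinearMap.ker_eq_bot']
      intro y hy
      by_contra hne
      obtain ⟨j, hj⟩ := exists_isLeadingIndex (Subtype.coe_ne_coe.2 hne)
      exact hj.1 (congrFun hy ⟨j, mem_leadingIndices.2 ⟨y, y.2, hj⟩⟩)
    simpa using LinearMap.finrank_le_finrank_of_injective hinj
  · have hex : ∀ j : leadingIndices L, ∃ y : L, IsLeadingIndex (y : ι → K) j := fun j => by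
      obtain ⟨y, hyL, hy⟩ := mem_leadingIndices.1 j.2
      exact ⟨⟨y, hyL⟩, hy⟩
    choose g hg using hex
    have hli : LinearIndependent K g :=
      LinearIndependent.of_comp L.subtype (linearIndependent_of_isLeadingIndex _ hg)
    simpa using hli.fintype_card_le_finrank

lemma mem_leadingIndices_pi_compl_bot [Fintype ι] {s : Set ι} {j : ι} :
    j ∈ leadingIndices (Submodule.pi sᶜ fun _ => (⊥ : Submodule K K)) ↔ j ∈ s := by
  rw [mem_leadingIndices]
  constructor
  · rintro ⟨y, hy, hj⟩
    by_contra hjs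
    exact hj.1 ((Submodule.mem_pi.1 hy) j hjs)
  · intro hjs
    refine ⟨Pi.single j 1, Submodule.mem_pi.2 fun k hk => ?_, by simp, fun k hjk => ?_⟩
    · rw [Pi.single_eq_of_ne (show k ≠ j by rintro rfl; exact hk hjs)]
      exact Submodule.zero_mem _
    · exact Pi.single_eq_of_ne hjk.ne' _

/-- A `0/1` matrix whose support is the graph of a strictly increasing partial map sends
leading indices to leading indices. -/
lemma IsLeadingIndex.mulVec [Fintype ι] {P : ι → κ → Prop}
    (hP : ∀ q q' p p', P q p → P q' p' → (q ≤ q' ↔ p ≤ p')) {y : ι → K} {q : ι} {p : κ}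
    (hy : IsLeadingIndex y q) (hqp : P q p) :
    IsLeadingIndex ((fun p' q' => if P q' p' then (1 : K) else 0 : Matrix κ ι K) *ᵥ y) p := by
  refine ⟨?_, fun k hpk => ?_⟩
  · simp only [Matrix.mulVec, dotProduct]
    rw [sum_eq_single q]
    · simpa [hqp] using hy.1
    · intro q' _ hq'
      have : ¬P q' p := fun h =>
        hq' (le_antisymm ((hP _ _ _ _ h hqp).2 le_rfl) ((hP _ _ _ _ hqp h).2 le_rfl))
      simp [this]
    · simp
  · simp only [Matrix.mulVec, dotProduct]
    refine sum_eq_zero fun q' _ => ?_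
    by_cases h : P q' k
    · have hqq' : q < q' := lt_of_not_ge fun hle => hpk.not_ge ((hP _ _ _ _ h hqp).1 hle)
      simp [hy.2 q' hqq']
    · simp [h]

end LeadingIndex

lemma stabInner_eq_sum_of_card_fiber {Q : FinQuiver} {ι : Type} [Fintype ι] (u : ι → Q.V)
    (v : Q.V → ℝ) (S : Finset ι) (d : Q.V → ℕ) (hd : ∀ i, d i = #{j ∈ S | u j = i}) :
    stabInner v d = ∑ j ∈ S, v (u j) := by
  rw [stabInner, ← sum_fiberwise S u (fun j => v (u j))]
  refine sum_congr rfl fun i _ => ?_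
  rw [sum_congr rfl fun j hj => congrArg v (mem_filter.1 hj).2, sum_const, nsmul_eq_mul, hd,
    mul_comm]

lemma finrank_submodule_self {K : Type} [Field K] (S : Submodule K K) :
    Module.finrank K S = if S = ⊥ then 0 else 1 := by
  rcases Ideal.eq_bot_or_top S with rfl | rfl
  · rw [if_pos rfl, finrank_bot]
  · rw [if_neg top_ne_bot, finrank_top, Module.finrank_self]

section ThinRep

variable {K : Type} [Field K] {Q : FinQuiver}

lemma stabInner_dimVec_thinRep (x : Q.V → ℝ) :
    stabInner x (thinRep K Q).dimVec = ∑ j, x j := by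
  refine sum_congr rfl fun j _ => ?_
  have hdim : (thinRep K Q).dimVec j = 1 := Module.finrank_self K
  rw [hdim, Nat.cast_one, mul_one]

lemma stabInner_subRep_thinRep (x : Q.V → ℝ) (N : QSubRep (thinRep K Q)) :
    stabInner x (fun j => Module.finrank K (N.L j)) = ∑ j with N.L j ≠ ⊥, x j := by
  rw [stabInner, sum_filter]
  refine sum_congr rfl fun j _ => ?_
  have hdim : Module.finrank K (N.L j) = if N.L j = ⊥ then 0 else 1 :=
    finrank_submodule_self (N.L j)
  rw [hdim]
  split_ifs <;> simp_all

end ThinRep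

section Words

variable {Q : FinQuiver}

lemma WordComposable.ltgt_eq_lsrc : ∀ {w : List (Letter Q)}, WordComposable w →
    ∀ {k : ℕ} {c d : Letter Q}, w[k]? = some c → w[k + 1]? = some d → ltgt c = lsrc d
  | [], _, _, _, _, h, _ => by simp at h
  | [_], _, _, _, _, _, h' => by simp at h'
  | _ :: _ :: _, hw, 0, _, _, h, h' => by
      simp only [List.getElem?_cons_zero, List.getElem?_cons_succ, Option.some.injEq] at h h'
      exact h ▸ h' ▸ hw.1
  | _ :: _ :: _, hw, _ + 1, _, _, h, h' => WordComposable.ltgt_eq_lsrc hw.2 h h'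

lemma WordReduced.ne_linv : ∀ {w : List (Letter Q)}, WordReduced w →
    ∀ {k : ℕ} {c d : Letter Q}, w[k]? = some c → w[k + 1]? = some d → d ≠ linv c
  | [], _, _, _, _, h, _ => by simp at h
  | [_], _, _, _, _, _, h' => by simp at h'
  | _ :: _ :: _, hw, 0, _, _, h, h' => by
      simp only [List.getElem?_cons_zero, List.getElem?_cons_succ, Option.some.injEq] at h h'
      exact h ▸ h' ▸ hw.1
  | _ :: _ :: _, hw, _ + 1, _, _, h, h' => WordReduced.ne_linv hw.2 h h'

lemma wVtx_succ (w : List (Letter Q)) (hw : w ≠ []) {k : ℕ} (hk : k < w.length) :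
    wVtx w hw (k + 1) = ltgt w[k] := by
  rw [wVtx, if_neg k.succ_ne_zero, Nat.add_sub_cancel, List.getD_eq_getElem _ _ hk]

lemma wVtx_eq_lsrc {w : List (Letter Q)} (hw : w ≠ []) (hcomp : WordComposable w) {k : ℕ}
    (hk : k < w.length) : wVtx w hw k = lsrc w[k] := by
  cases k with
  | zero => rw [wVtx, if_pos rfl, List.head_eq_getElem]
  | succ k =>
    rw [wVtx_succ w hw (by omega)]
    exact hcomp.ltgt_eq_lsrc (List.getElem?_eq_getElem _) (List.getElem?_eq_getElem _)

/-- The order of positions could only be reversed by occurrences of `a` and `a⁻¹` at adjacent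
positions, which reducedness excludes. -/
lemma stepsTo_le_iff {w : List (Letter Q)} (hred : WordReduced w) {a : Q.A} {q q' p p' : ℕ}
    (h : stepsTo w a q p) (h' : stepsTo w a q' p') : q ≤ q' ↔ p ≤ p' := by
  rcases h with ⟨rfl, hq⟩ | ⟨rfl, hp⟩ <;> rcases h' with ⟨rfl, hq'⟩ | ⟨rfl, hp'⟩
  · omega
  · have hne : p' ≠ q := by rintro rfl; simp [hq] at hp'
    have hne' : p' + 1 ≠ q := by rintro rfl; exact hred.ne_linv hp' hq rfl
    omega
  · have hne : q' ≠ p := by rintro rfl; simp [hq'] at hp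
    have hne' : q' + 1 ≠ p := by rintro rfl; exact hred.ne_linv hq' hp rfl
    omega
  · omega

lemma exists_stringQuiver_arrow_of_stepsTo {w : List (Letter Q)} {a : Q.A}
    {q p : Fin (w.length + 1)} (h : stepsTo w a q p) :
    ∃ b, (stringQuiver Q w).s b = q ∧ (stringQuiver Q w).t b = p := by
  rcases h with ⟨hpq, hq⟩ | ⟨hqp, hp⟩
  · obtain ⟨hk, hget⟩ := List.getElem?_eq_some_iff.1 hq
    exact ⟨⟨q, hk⟩, by simp [hget], by simp [hget, Fin.ext_iff, hpq]⟩
  · obtain ⟨hk, hget⟩ := List.getElem?_eq_some_iff.1 hp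
    exact ⟨⟨p, hk⟩, by simp [hget, Fin.ext_iff, hqp], by simp [hget]⟩

lemma exists_stepsTo_of_stringQuiver_arrow {w : List (Letter Q)} (hw : w ≠ [])
    (hcomp : WordComposable w) (b : Fin w.length) :
    ∃ a, wVtx w hw ((stringQuiver Q w).s b) = Q.s a ∧
      wVtx w hw ((stringQuiver Q w).t b) = Q.t a ∧
      stepsTo w a ((stringQuiver Q w).s b) ((stringQuiver Q w).t b) := by
  obtain ⟨k, hk⟩ := b
  rcases hget : w[k] with a | a
  · refine ⟨a, ?_, ?_, ?_⟩
    · simp [hget, wVtx_eq_lsrc hw hcomp hk, lsrc]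
    · simp [hget, wVtx_succ w hw hk, ltgt]
    · simp [hget, stepsTo, List.getElem?_eq_getElem hk]
  · refine ⟨a, ?_, ?_, ?_⟩
    · simp [hget, wVtx_succ w hw hk, ltgt]
    · simp [hget, wVtx_eq_lsrc hw hcomp hk, lsrc]
    · simp [hget, stepsTo, List.getElem?_eq_getElem hk]

end Words

section StringModule

variable {K : Type} [Field K] {Q : FinQuiver} {w : List (Letter Q)} {hw : w ≠ []}

lemma stringRep_φ_apply (a : Q.A) (y : (stringRep K Q w hw).M (Q.s a))
    (p : {j : Fin (w.length + 1) // wVtx w hw j = Q.t a}) :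
    (stringRep K Q w hw).φ a y p = ∑ q, (if stepsTo w a q.1 p.1 then (1 : K) else 0) * y q :=
  rfl

noncomputable def leadingPositions (L : QSubRep (stringRep K Q w hw)) :
    Finset (Fin (w.length + 1)) :=
  {j | ⟨j, rfl⟩ ∈ leadingIndices (L.L (wVtx w hw j))}

lemma mem_leadingPositions_iff {L : QSubRep (stringRep K Q w hw)} {j : Fin (w.length + 1)}
    {i : Q.V} (h : wVtx w hw j = i) :
    j ∈ leadingPositions L ↔ ⟨j, h⟩ ∈ leadingIndices (L.L i) := by
  subst h
  simp [leadingPositions]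

lemma card_leadingIndices_eq (L : QSubRep (stringRep K Q w hw)) (i : Q.V) :
    #(leadingIndices (L.L i)) =
      #((leadingPositions L).filter fun j : Fin (w.length + 1) => wVtx w hw j = i) := by
  rw [← card_map (Function.Embedding.subtype _)]
  refine congrArg card (Finset.ext fun j => ?_)
  simp only [mem_map, mem_filter, Function.Embedding.coe_subtype]
  constructor
  · rintro ⟨p, hp, rfl⟩
    exact ⟨(mem_leadingPositions_iff p.2).2 hp, p.2⟩
  · rintro ⟨hj, hji⟩
    exact ⟨⟨j, hji⟩, (mem_leadingPositions_iff hji).1 hj, rfl⟩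

lemma stabInner_dimVec_stringRep (v : Q.V → ℝ) :
    stabInner v (stringRep K Q w hw).dimVec = ∑ j : Fin (w.length + 1), v (wVtx w hw j) :=
  stabInner_eq_sum_of_card_fiber _ v univ _ fun _ =>
    (Module.finrank_fintype_fun_eq_card K).trans (Fintype.card_subtype _)

lemma stabInner_subRep_stringRep (v : Q.V → ℝ) (L : QSubRep (stringRep K Q w hw)) :
    stabInner v (fun i => Module.finrank K (L.L i)) =
      ∑ j ∈ leadingPositions L, v (wVtx w hw j) :=
  stabInner_eq_sum_of_card_fiber _ v _ _ fun i =>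
    (finrank_eq_card_leadingIndices (L.L i)).trans (card_leadingIndices_eq L i)

lemma leadingPositions_stepsTo (hred : WordReduced w) (L : QSubRep (stringRep K Q w hw))
    {a : Q.A} {q p : Fin (w.length + 1)} (hq : wVtx w hw q = Q.s a)
    (hp : wVtx w hw p = Q.t a) (h : stepsTo w a q p) (hqL : q ∈ leadingPositions L) :
    p ∈ leadingPositions L := by
  obtain ⟨y, hyL, hy⟩ := mem_leadingIndices.1 ((mem_leadingPositions_iff hq).1 hqL)
  have hmono : ∀ (q q' : {j : Fin (w.length + 1) // wVtx w hw j = Q.s a})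
      (p p' : {j : Fin (w.length + 1) // wVtx w hw j = Q.t a}),
      stepsTo w a q.1 p.1 → stepsTo w a q'.1 p'.1 → (q ≤ q' ↔ p ≤ p') :=
    fun _ _ _ _ => stepsTo_le_iff hred
  exact (mem_leadingPositions_iff hp).2
    (mem_leadingIndices.2 ⟨_, L.compat a y hyL, hy.mulVec hmono h⟩)

noncomputable def leadingThinSubRep (hcomp : WordComposable w) (hred : WordReduced w)
    (L : QSubRep (stringRep K Q w hw)) : QSubRep (thinRep K (stringQuiver Q w)) where
  L j := if j ∈ leadingPositions L then ⊤ else ⊥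
  compat b x hx := by
    obtain ⟨a, hs, ht, h⟩ := exists_stepsTo_of_stringQuiver_arrow hw hcomp b
    dsimp only at hx ⊢
    split_ifs at hx with hb
    · rw [if_pos (leadingPositions_stepsTo hred L hs ht h hb)]
      trivial
    · rw [(Submodule.mem_bot K).1 hx]
      exact zero_mem _

lemma leadingThinSubRep_ne_bot_iff (hcomp : WordComposable w) (hred : WordReduced w)
    (L : QSubRep (stringRep K Q w hw)) (j : Fin (w.length + 1)) :
    (leadingThinSubRep hcomp hred L).L j ≠ ⊥ ↔ j ∈ leadingPositions L := by
  dsimp only [leadingThinSubRep]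
  split_ifs with hj
  · exact iff_of_true (top_ne_bot : (⊤ : Submodule K K) ≠ ⊥) hj
  · exact iff_of_false (not_not.2 rfl) hj

lemma thinSubRep_le_of_stepsTo (N : QSubRep (thinRep K (stringQuiver Q w))) {a : Q.A}
    {q p : Fin (w.length + 1)} (h : stepsTo w a q p) : N.L q ≤ N.L p := by
  obtain ⟨b, rfl, rfl⟩ := exists_stringQuiver_arrow_of_stepsTo h
  exact N.compat b

noncomputable def coordSubRep (N : QSubRep (thinRep K (stringQuiver Q w))) :
    QSubRep (stringRep K Q w hw) where
  L _ := Submodule.pi {p | N.L p.1 ≠ ⊥}ᶜ fun _ => ⊥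
  compat a y hy := by
    refine Submodule.mem_pi.2 fun p hp => ?_
    have hp : N.L p.1 = ⊥ := not_not.1 hp
    refine (Submodule.mem_bot K).2
      ((stringRep_φ_apply a y p).trans (sum_eq_zero fun q _ => ?_))
    by_cases h : stepsTo w a q.1 p.1
    · have hq : N.L q.1 = ⊥ := le_bot_iff.1 (hp ▸ thinSubRep_le_of_stepsTo N h)
      simp [(Submodule.mem_bot K).1 (Submodule.mem_pi.1 hy q (not_not.2 hq))]
    · simp [h]

lemma leadingPositions_coordSubRep (N : QSubRep (thinRep K (stringQuiver Q w))) :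
    leadingPositions (coordSubRep (hw := hw) N) = ({j | N.L j ≠ ⊥} : Finset _) := by
  refine Finset.ext fun j => (mem_leadingPositions_iff (L := coordSubRep N) rfl).trans ?_
  exact mem_leadingIndices_pi_compl_bot.trans
    (mem_filter_univ (p := fun j => N.L j ≠ ⊥) j).symm

theorem isSemistable_stringRep_iff (hcomp : WordComposable w) (hred : WordReduced w)
    (v : Q.V → ℝ) :
    IsSemistable (stringRep K Q w hw) v ↔
      IsSemistable (thinRep K (stringQuiver Q w)) fun j => v (wVtx w hw j) := by
  simp only [IsSemistable, stabInner_dimVec_stringRep, stabInner_dimVec_thinRep,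
    stabInner_subRep_stringRep, stabInner_subRep_thinRep]
  refine and_congr_right fun _ => ⟨fun h N => ?_, fun h L => ?_⟩
  · simpa [leadingPositions_coordSubRep] using h (coordSubRep N)
  · simpa [leadingThinSubRep_ne_bot_iff] using h (leadingThinSubRep hcomp hred L)

end StringModule

theorem stability_space_of_string_module_from_thin_general
    (K : Type) [Field K] (Q : FinQuiver) (D : BoundQuiver Q)
    (w : List (Letter Q)) (hw : IsString D w) :
    (fun (v : Q.V → ℝ) (j : Fin (w.length + 1)) => v (wVtx w hw.ne j)) ''
        stabSpace (stringRep K Q w hw.ne) =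
      stabSpace (thinRep K (stringQuiver Q w)) ∩
        {x : Fin (w.length + 1) → ℝ |
          ∀ j k : Fin (w.length + 1), wVtx w hw.ne j = wVtx w hw.ne k → x j = x k} := by
  ext x
  constructor
  · rintro ⟨v, hv, rfl⟩
    exact ⟨(isSemistable_stringRep_iff hw.comp hw.red v).1 hv, fun j k h => congrArg v h⟩
  · rintro ⟨hx, hfac⟩
    set v := Function.extend (fun k : Fin (w.length + 1) => wVtx w hw.ne k) x 0
    have hv : (fun j : Fin (w.length + 1) => v (wVtx w hw.ne j)) = x :=
      funext (Function.FactorsThrough.extend_apply hfac 0)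
    exact ⟨v, (isSemistable_stringRep_iff hw.comp hw.red v).2 (hv ▸ hx), hv⟩

/-- For a string `w` over a special biserial algebra, the image under `ι`
of the stability space of the string module `M(w)` is the intersection of the stability
space of the thin representation `T(w)` with the subspace `R` identifying the coordinates
of repeated vertices. -/
theorem stability_space_of_string_module_from_thin
    (K : Type) [Field K] [IsAlgClosed K] (Q : FinQuiver) (D : BoundQuiver Q)
    (hsb : SpecialBiserial D) (w : List (Letter Q)) (hw : IsString D w) :
    (fun (v : Q.V → ℝ) (j : Fin (w.length + 1)) => v (wVtx w hw.ne j)) ''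
        stabSpace (stringRep K Q w hw.ne) =
      stabSpace (thinRep K (stringQuiver Q w)) ∩
        {x : Fin (w.length + 1) → ℝ |
          ∀ j k : Fin (w.length + 1), wVtx w hw.ne j = wVtx w hw.ne k → x j = x k} :=
  stability_space_of_string_module_from_thin_general K Q D w hw
end

section
/- Let A = KQ/I be a bound quiver algebra over an algebraically closed field K, let b be a band for A and λ ∈ K^×. Then D(M(b,λ,r)) = D(M(b,λ,1)) for every integer r ≥ 1. -/
attribute [local instance] Classical.propDecidable

/-!
The Jordan block makes `M(b, λ, r)` an iterated extension of `r` copies of `M(b, λ, 1)`. Indexing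
the basis vectors `z_i^k` by their Jordan slot `k`, every letter acts by a lower triangular
matrix whose diagonal blocks are the action on `M(b, λ, 1)`. Hence the vectors supported in the
slots `≥ c` form a chain of subrepresentations with all subquotients `M(b, λ, 1)`, and the last
slot is a copy of `M(b, λ, 1)` inside `M(b, λ, r)`. The embedding carries subrepresentations of
`M(b, λ, 1)` to subrepresentations of `M(b, λ, r)` with the same dimension vector, while the chain
splits the dimension vector of a subrepresentation of `M(b, λ, r)` into those of `r`
subrepresentations of `M(b, λ, 1)`. Together with `dim M(b, λ, r) = r • dim M(b, λ, 1)`, the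
two semistability conditions become equivalent.
-/

open Module (finrank)

namespace Submodule

variable {K M N : Type*} [Field K] [AddCommGroup M] [Module K M] [FiniteDimensional K M]
  [AddCommGroup N] [Module K N]

theorem finrank_map_add_finrank_inf_ker (P : Submodule K M) (f : M →ₗ[K] N) :
    finrank K (P.map f) + finrank K ↥(P ⊓ LinearMap.ker f) = finrank K P := by
  have h := (f.domRestrict P).finrank_range_add_finrank_ker
  rwa [LinearMap.range_domRestrict, LinearMap.ker_domRestrict,
    (P.equivSubtypeMap _).finrank_eq, map_comap_subtype] at h

theorem finrank_eq_sum_finrank_map_inf {r : ℕ} (F : ℕ → Submodule K M)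
    (π : Fin r → M →ₗ[K] N) (hF0 : F 0 = ⊤) (hFr : F r = ⊥)
    (hF : ∀ c : Fin r, F (c + 1) = F c ⊓ LinearMap.ker (π c)) (L : Submodule K M) :
    finrank K L = ∑ c : Fin r, finrank K ((L ⊓ F c).map (π c)) := by
  have step (c : Fin r) : finrank K ((L ⊓ F c).map (π c)) + finrank K ↥(L ⊓ F (c + 1))
      = finrank K ↥(L ⊓ F c) := by
    rw [hF c, ← inf_assoc]
    exact finrank_map_add_finrank_inf_ker _ _
  have telescope := Finset.sum_range_sub' (fun c => (finrank K ↥(L ⊓ F c) : ℤ)) r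
  rw [← Fin.sum_univ_eq_sum_range, hF0, hFr, inf_top_eq, inf_bot_eq, finrank_bot, Nat.cast_zero,
    sub_zero] at telescope
  zify
  rw [← telescope]
  refine Finset.sum_congr rfl fun c _ => ?_
  rw [← step c]
  push_cast
  ring

end Submodule

section Semistability

variable {K : Type} [Field K] {Q : FinQuiver}

theorem stabInner_nsmul (v : Q.V → ℝ) (r : ℕ) (d : Q.V → ℕ) :
    stabInner v (r • d) = r * stabInner v d := by
  simp only [stabInner, Finset.mul_sum, Pi.smul_apply, smul_eq_mul, Nat.cast_mul]
  exact Finset.sum_congr rfl fun i _ => by ring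

theorem stabInner_sum {ι : Type*} (s : Finset ι) (v : Q.V → ℝ) (d : ι → Q.V → ℕ) :
    stabInner v (∑ c ∈ s, d c) = ∑ c ∈ s, stabInner v (d c) := by
  simp only [stabInner, Finset.sum_apply, Nat.cast_sum, Finset.mul_sum]
  exact Finset.sum_comm

def QSubRep.inf {R : QRep K Q} (N N' : QSubRep R) : QSubRep R where
  L i := N.L i ⊓ N'.L i
  compat a _ hx := ⟨N.compat a _ hx.1, N'.compat a _ hx.2⟩

def QSubRep.image {R R' : QRep K Q} (N : QSubRep R) (f : ∀ i, R.M i →ₗ[K] R'.M i)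
    (hf : ∀ a, ∀ x ∈ N.L (Q.s a), f (Q.t a) (R.φ a x) = R'.φ a (f (Q.s a) x)) :
    QSubRep R' where
  L i := (N.L i).map (f i)
  compat a := by
    rintro _ ⟨x, hx, rfl⟩
    exact ⟨R.φ a x, N.compat a x hx, hf a x hx⟩

variable {R R' : QRep K Q}

theorem stabSpace_subset_of_injective {r : ℕ} (hr : r ≠ 0) (hdim : R'.dimVec = r • R.dimVec)
    (f : ∀ i, R.M i →ₗ[K] R'.M i) (hf : ∀ a x, f (Q.t a) (R.φ a x) = R'.φ a (f (Q.s a) x))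
    (hinj : ∀ i, Function.Injective (f i)) : stabSpace R' ⊆ stabSpace R := by
  rintro v ⟨hdimR', hsub⟩
  refine ⟨?_, fun N => ?_⟩
  · rw [hdim, stabInner_nsmul] at hdimR'
    exact (mul_eq_zero.mp hdimR').resolve_left (Nat.cast_ne_zero.mpr hr)
  · have hfinrank (i : Q.V) : finrank K ((N.L i).map (f i)) = finrank K (N.L i) :=
      (Submodule.equivMapOfInjective _ (hinj i) _).finrank_eq.symm
    convert hsub (N.image f fun a x _ => hf a x) using 3 with i
    exact (hfinrank i).symm

theorem stabSpace_subset_of_filtration {r : ℕ} (hdim : R'.dimVec = r • R.dimVec)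
    (F : ℕ → QSubRep R') (π : Fin r → ∀ i, R'.M i →ₗ[K] R.M i)
    (hF0 : ∀ i, (F 0).L i = ⊤) (hFr : ∀ i, (F r).L i = ⊥)
    (hF : ∀ (c : Fin r) i, (F (c + 1)).L i = (F c).L i ⊓ LinearMap.ker (π c i))
    (hπ : ∀ (c : Fin r) a, ∀ x ∈ (F c).L (Q.s a),
      π c (Q.t a) (R'.φ a x) = R.φ a (π c (Q.s a) x)) :
    stabSpace R ⊆ stabSpace R' := by
  rintro v ⟨hdimR, hsub⟩
  refine ⟨by rw [hdim, stabInner_nsmul, hdimR, mul_zero], fun L => ?_⟩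
  let piece (c : Fin r) : QSubRep R := (L.inf (F c)).image (π c) fun a x hx => hπ c a x hx.2
  have hdimL :
      (fun i => finrank K (L.L i)) = ∑ c : Fin r, fun i => finrank K ((piece c).L i) := by
    funext i
    rw [Finset.sum_apply]
    exact Submodule.finrank_eq_sum_finrank_map_inf (fun c => (F c).L i) (fun c => π c i)
      (hF0 i) (hFr i) (fun c => hF c i) (L.L i)
  rw [hdimL, stabInner_sum]
  exact Finset.sum_nonpos fun c _ => hsub (piece c)

end Semistability

section JordanSlots

variable (K α : Type*) [Field K] (m : ℕ)

def slotsFrom (c : ℕ) : Submodule K (α × Fin m → K) where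
  carrier := {x | ∀ p, (p.2 : ℕ) < c → x p = 0}
  add_mem' hx hy p hp := by simp [hx p hp, hy p hp]
  zero_mem' _ _ := rfl
  smul_mem' t x hx p hp := by simp [hx p hp]

variable {K α m}

theorem mem_slotsFrom {c : ℕ} {x : α × Fin m → K} :
    x ∈ slotsFrom K α m c ↔ ∀ p, (p.2 : ℕ) < c → x p = 0 := Iff.rfl

def slot (c : Fin m) : (α × Fin m → K) →ₗ[K] (α × Fin 1 → K) :=
  LinearMap.funLeft K K fun p => (p.1, c)

theorem slot_apply (c : Fin m) (x : α × Fin m → K) (p : α × Fin 1) :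
    slot c x p = x (p.1, c) :=
  rfl

def slotIncl (c : Fin m) : (α × Fin 1 → K) →ₗ[K] (α × Fin m → K) where
  toFun x p := if p.2 = c then x (p.1, 0) else 0
  map_add' x y := by funext p; by_cases h : p.2 = c <;> simp [h]
  map_smul' t x := by funext p; by_cases h : p.2 = c <;> simp [h]

theorem slot_slotIncl (c : Fin m) (x : α × Fin 1 → K) : slot c (slotIncl c x) = x := by
  funext p
  simp [slot_apply, slotIncl, Subsingleton.elim (0 : Fin 1) p.2]

theorem slotIncl_injective (c : Fin m) :
    Function.Injective (slotIncl c : (α × Fin 1 → K) →ₗ[K] (α × Fin m → K)) :=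
  Function.LeftInverse.injective (slot_slotIncl c)

theorem slotIncl_mem_slotsFrom (c : Fin m) (x : α × Fin 1 → K) :
    slotIncl c x ∈ slotsFrom K α m c := by
  intro p hp
  simp [slotIncl, Fin.ne_of_lt (Fin.lt_def.mpr hp)]

theorem slotsFrom_zero : slotsFrom K α m 0 = ⊤ :=
  eq_top_iff.mpr fun _ _ _ hp => absurd hp (Nat.not_lt_zero _)

theorem slotsFrom_self : slotsFrom K α m m = ⊥ :=
  eq_bot_iff.mpr fun _ hx => funext fun p => hx p p.2.isLt

theorem slotsFrom_succ (c : Fin m) :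
    slotsFrom K α m (c + 1) = slotsFrom K α m c ⊓ LinearMap.ker (slot c) := by
  ext x
  simp only [Submodule.mem_inf, mem_slotsFrom, LinearMap.mem_ker, funext_iff, slot_apply,
    Pi.zero_apply]
  refine ⟨fun hx => ⟨fun p hp => hx p (by omega), fun p => hx _ (by simp)⟩, ?_⟩
  rintro ⟨hlt, hc⟩ ⟨a, d⟩ hd
  rcases Nat.lt_succ_iff_lt_or_eq.mp hd with hd | hd
  · exact hlt _ hd
  · obtain rfl : d = c := Fin.ext hd
    exact hc (a, 0)

end JordanSlots

section BandModule

variable {K : Type} [Field K] {Q : FinQuiver} (b : List (Letter Q)) (hb : b ≠ []) (lam : K)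

theorem bandRep_φ_apply {m : ℕ} (a : Q.A) (x : (bandRep K Q b hb lam m).M (Q.s a))
    (p : {j : Fin b.length // bVtx b hb j = Q.t a} × Fin m) :
    (bandRep K Q b hb lam m).φ a x p
      = ∑ q, bandEntry K b hb lam a p.1.1 q.1.1 p.2 q.2 * x q := rfl

theorem bandEntry_eq_zero_of_lt {m : ℕ} (a : Q.A) (k j : ℕ) {κ μ : Fin m} (h : κ < μ) :
    bandEntry K b hb lam a k j κ μ = 0 := by
  have hne : κ ≠ μ := h.ne
  have hsucc : (μ : ℕ) + 1 ≠ κ := by omega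
  simp [bandEntry, jordEntry, hne, hsucc]

theorem bandEntry_diag {m : ℕ} (a : Q.A) (k j : ℕ) (κ : Fin m) :
    bandEntry K b hb lam a k j κ κ = bandEntry K b hb lam a k j (0 : Fin 1) 0 := by
  simp [bandEntry, jordEntry]

theorem bandRep_dimVec (m : ℕ) :
    (bandRep K Q b hb lam m).dimVec = m • (bandRep K Q b hb lam 1).dimVec := by
  have hcard (n : ℕ) (i : Q.V) : (bandRep K Q b hb lam n).dimVec i
      = n * Fintype.card {j : Fin b.length // bVtx b hb j = i} :=
    (Module.finrank_fintype_fun_eq_card K).trans (by simp [mul_comm])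
  funext i
  simp [hcard]

def bandSlotsFrom (m c : ℕ) : QSubRep (bandRep K Q b hb lam m) where
  L _ := slotsFrom K _ m c
  compat a x hx p hp := by
    rw [bandRep_φ_apply]
    refine Finset.sum_eq_zero fun q _ => ?_
    rcases lt_or_ge (q.2 : ℕ) c with hq | hq
    · rw [hx q hq, mul_zero]
    · rw [bandEntry_eq_zero_of_lt b hb lam a _ _ (Fin.lt_def.mpr (hp.trans_le hq)), zero_mul]

/- `slot` and `slotIncl` retyped as maps between band modules, whose vertex spaces are function
spaces only up to unfolding `bandRep`: this lets `rw` work on their values. -/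

def bandSlot {m : ℕ} (c : Fin m) (i : Q.V) :
    (bandRep K Q b hb lam m).M i →ₗ[K] (bandRep K Q b hb lam 1).M i :=
  slot c

theorem bandSlot_apply {m : ℕ} (c : Fin m) {i : Q.V} (x : (bandRep K Q b hb lam m).M i)
    (p : {j : Fin b.length // bVtx b hb j = i} × Fin 1) : bandSlot b hb lam c i x p = x (p.1, c) :=
  rfl

def bandSlotIncl {m : ℕ} (c : Fin m) (i : Q.V) :
    (bandRep K Q b hb lam 1).M i →ₗ[K] (bandRep K Q b hb lam m).M i :=
  slotIncl c

theorem bandSlotIncl_apply {m : ℕ} (c : Fin m) {i : Q.V} (x : (bandRep K Q b hb lam 1).M i)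
    (p : {j : Fin b.length // bVtx b hb j = i} × Fin m) :
    bandSlotIncl b hb lam c i x p = if p.2 = c then x (p.1, 0) else 0 :=
  rfl

theorem bandSlot_bandSlotIncl {m : ℕ} (c : Fin m) {i : Q.V} (x : (bandRep K Q b hb lam 1).M i) :
    bandSlot b hb lam c i (bandSlotIncl b hb lam c i x) = x :=
  slot_slotIncl c x

theorem bandSlot_bandRep_φ {m : ℕ} (c : Fin m) (a : Q.A) {x : (bandRep K Q b hb lam m).M (Q.s a)}
    (hx : x ∈ (bandSlotsFrom b hb lam m c).L (Q.s a)) :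
    bandSlot b hb lam c (Q.t a) ((bandRep K Q b hb lam m).φ a x)
      = (bandRep K Q b hb lam 1).φ a (bandSlot b hb lam c (Q.s a) x) := by
  funext p
  rw [bandSlot_apply, bandRep_φ_apply, bandRep_φ_apply, Fintype.sum_prod_type,
    Fintype.sum_prod_type]
  refine Finset.sum_congr rfl fun q _ => ?_
  rw [Fin.sum_univ_one, bandSlot_apply, Finset.sum_eq_single c, bandEntry_diag,
    Subsingleton.elim p.2 0]
  · intro d _ hdc
    rcases lt_or_gt_of_ne hdc with h | h
    · rw [hx _ h, mul_zero]
    · rw [bandEntry_eq_zero_of_lt b hb lam a _ _ h, zero_mul]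
  · simp

theorem bandSlotIncl_last_bandRep_φ (n : ℕ) (a : Q.A) (x : (bandRep K Q b hb lam 1).M (Q.s a)) :
    bandSlotIncl b hb lam (Fin.last n) (Q.t a) ((bandRep K Q b hb lam 1).φ a x)
      = (bandRep K Q b hb lam (n + 1)).φ a (bandSlotIncl b hb lam (Fin.last n) (Q.s a) x) := by
  have hincl : bandSlotIncl b hb lam (Fin.last n) (Q.s a) x
      ∈ (bandSlotsFrom b hb lam (n + 1) n).L (Q.s a) :=
    slotIncl_mem_slotsFrom (Fin.last n) x
  funext ⟨q, d⟩
  rw [bandSlotIncl_apply]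
  by_cases hd : d = Fin.last n
  · subst hd
    have := congrFun (bandSlot_bandRep_φ b hb lam (Fin.last n) a hincl) (q, 0)
    rw [bandSlot_bandSlotIncl, bandSlot_apply] at this
    rw [if_pos rfl, ← this]
  · rw [if_neg hd,
      (bandSlotsFrom b hb lam (n + 1) n).compat a _ hincl _ (Fin.lt_last_iff_ne_last.mpr hd)]

end BandModule

theorem stability_space_of_band_module_independent_of_rank_general
    (K : Type) [Field K] (Q : FinQuiver) (D : BoundQuiver Q)
    (b : List (Letter Q)) (hb : IsBand D b) (lam : K)
    (r : ℕ) (hr : 1 ≤ r) :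
    stabSpace (bandRep K Q b hb.1 lam r) = stabSpace (bandRep K Q b hb.1 lam 1) := by
  obtain ⟨n, rfl⟩ := Nat.exists_eq_add_of_le' hr
  refine subset_antisymm ?_ ?_
  · exact stabSpace_subset_of_injective n.succ_ne_zero (bandRep_dimVec b hb.1 lam _)
      (bandSlotIncl b hb.1 lam (Fin.last n)) (bandSlotIncl_last_bandRep_φ b hb.1 lam n)
      fun _ => slotIncl_injective (Fin.last n)
  · exact stabSpace_subset_of_filtration (bandRep_dimVec b hb.1 lam _)
      (bandSlotsFrom b hb.1 lam (n + 1)) (bandSlot b hb.1 lam) (fun _ => slotsFrom_zero)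
      (fun _ => slotsFrom_self) (fun c _ => slotsFrom_succ c)
      (fun c a _ hx => bandSlot_bandRep_φ b hb.1 lam c a hx)

/-- For a band `b` over a bound quiver algebra and `λ ∈ K^×`, the
stability space of the band module `M(b, λ, r)` equals that of `M(b, λ, 1)` for every
`r ≥ 1`. -/
theorem stability_space_of_band_module_independent_of_rank
    (K : Type) [Field K] [IsAlgClosed K] (Q : FinQuiver) (D : BoundQuiver Q)
    (b : List (Letter Q)) (hb : IsBand D b) (lam : K) (hlam : lam ≠ 0)
    (r : ℕ) (hr : 1 ≤ r) :
    stabSpace (bandRep K Q b hb.1 lam r) = stabSpace (bandRep K Q b hb.1 lam 1) :=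
  stability_space_of_band_module_independent_of_rank_general K Q D b hb lam r hr
end
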